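/- (Poisson-type summation formula in the 2D-DT-NS-LCT domain) For a sequence c ∈ l¹(ℤ²) and a non-singular 2×2 integer matrix M with m = |det(M)| and coset representatives γ₀ = 0, γ₁, …, γ_{m−1} of ℤ²/Mℤ², one has for all ξ: (m/√det(iB)) · F[S_M(c·λ_M)](ξ) = Σ_{k=0}^{m−1} e^{−iπ [BM⁻¹(ξ+γ_k)]ᵀ D M⁻¹ (ξ+γ_k)} (L_M c)(BM⁻¹(ξ+γ_k)), where (S_M d)(k) = d(Mᵀk), λ_M(n) = e^{iπ nᵀB⁻¹An}, and F is the discrete-time Fourier transform (F d)(ξ) = Σ_{k∈ℤ²} d(k) e^{−2iπ kᵀξ}. -/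

import Mathlib

open MeasureTheory Matrix Complex

noncomputable section

abbrev V2 : Type := Fin 2 → ℝ
abbrev Z2 : Type := Fin 2 → ℤ
abbrev M2 : Type := Matrix (Fin 2) (Fin 2) ℝ

/-- cast an integer vector to a real vector -/
def zc (k : Z2) : V2 := fun i => (k i : ℝ)

/-- `ePi r = e^{iπ r}` -/
def ePi (r : ℝ) : ℂ := Complex.exp (Real.pi * Complex.I * r)

/-- quadratic/bilinear form `xᵀ P y` -/
def Q (P : M2) (x y : V2) : ℝ := x ⬝ᵥ P.mulVec y

/-- `√(det (iB))` (note `det(iB) = i² det B` for 2×2 `B`) -/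
def sdet (B : M2) : ℂ := ((Complex.I ^ 2 * (B.det : ℂ))) ^ ((1 : ℂ)/2)

/-- the chirp `λ_M(t) = e^{iπ tᵀB⁻¹At}` -/
def lam (A B : M2) (t : V2) : ℂ := ePi (Q (B⁻¹ * A) t t)

/-- the continuous 2D non-separable LCT -/
def LCT (A B D : M2) (f : V2 → ℂ) (ξ : V2) : ℂ :=
  (sdet B)⁻¹ * ∫ u : V2, f u * ePi (Q (B⁻¹ * A) u u - 2 * Q B⁻¹ u ξ + Q (D * B⁻¹) ξ ξ)

/-- the 2D discrete-time non-separable LCT -/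
def DLCT (A B D : M2) (s : Z2 → ℂ) (ξ : V2) : ℂ :=
  (sdet B)⁻¹ * ∑' k : Z2,
    s k * ePi (Q (B⁻¹ * A) (zc k) (zc k) - 2 * Q B⁻¹ (zc k) ξ + Q (D * B⁻¹) ξ ξ)

/-- the canonical (continuous) convolution `⋆_c` -/
def cconv (A B : M2) (f g : V2 → ℂ) (t : V2) : ℂ :=
  ePi (-(Q (B⁻¹ * A) t t)) * (sdet B)⁻¹ *
    ∫ x : V2, lam A B (t - x) * f (t - x) * (lam A B x * g x)

/-- the canonical semi-discrete convolution `⋆_{sd}` -/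
def sdconv (A B : M2) (s : Z2 → ℂ) (g : V2 → ℂ) (t : V2) : ℂ :=
  ePi (-(Q (B⁻¹ * A) t t)) * (sdet B)⁻¹ *
    ∑' k : Z2, lam A B (zc k) * s k * (lam A B (t - zc k) * g (t - zc k))

/-- the canonical discrete convolution `⋆_d` -/
def dconv (A B : M2) (s c : Z2 → ℂ) (l : Z2) : ℂ :=
  ePi (-(Q (B⁻¹ * A) (zc l) (zc l))) * (sdet B)⁻¹ *
    ∑' k : Z2, lam A B (zc k) * s k * (lam A B (zc (l - k)) * c (l - k))

/-- symplecticity of the block matrix `[A,B;C,D]` -/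
def Symp (A B C D : M2) : Prop :=
  A * Bᵀ = B * Aᵀ ∧ C * Dᵀ = D * Cᵀ ∧ A * Dᵀ - B * Cᵀ = 1

/-- the unit half-open square `[0,1)²` -/
def box : Set V2 := Set.univ.pi fun _ => Set.Ico (0:ℝ) 1

/-- real cast of an integer matrix -/
def Mr (M : Matrix (Fin 2) (Fin 2) ℤ) : M2 := M.map (Int.cast : ℤ → ℝ)

/-- the set `N(M)` of integer points in the fundamental parallelepiped -/
def NM (M : Matrix (Fin 2) (Fin 2) ℤ) : Set Z2 :=
  {k : Z2 | ∃ x : V2, x ∈ box ∧ zc k = (Mr M).mulVec x}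

/-- the discrete time Fourier transform -/
def DTFT (d : Z2 → ℂ) (ξ : V2) : ℂ := ∑' k : Z2, d k * ePi (-(2 * (zc k ⬝ᵥ ξ)))

/-! The downsampled sequence `k ↦ d (Mᵀ k)` has as DTFT the average of the DTFT of `d` over the
`m` shifts `M⁻¹(ξ + γⱼ)`: expanding the right side, the finite sum over `j` of the characters
`x ↦ e^{-2iπ nᵀM⁻¹x}` of `ℤ²/Mℤ²` is `m` when `n ∈ Mᵀℤ²` and `0` otherwise. The DLCT is, up to
the chirp `e^{-iπ ηᵀDB⁻¹η}` and `1/√det(iB)`, the DTFT of the chirped sequence `c·λ` at `B⁻¹η`,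
so the formula is this downsampling identity for `d = c·λ`. -/

lemma ePi_add (a b : ℝ) : ePi (a + b) = ePi a * ePi b := by
  rw [ePi, ePi, ePi, ← Complex.exp_add]; push_cast; ring_nf

lemma norm_ePi (r : ℝ) : ‖ePi r‖ = 1 := by
  rw [ePi, show (Real.pi : ℂ) * I * r = (Real.pi * r : ℝ) * I by push_cast; ring,
    Complex.norm_exp_ofReal_mul_I]

lemma ePi_neg_two_mul_eq_one_iff (r : ℝ) : ePi (-(2 * r)) = 1 ↔ ∃ n : ℤ, r = n := by
  have hπI : (Real.pi : ℂ) * I ≠ 0 := mul_ne_zero (by exact_mod_cast Real.pi_ne_zero) I_ne_zero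
  rw [ePi, Complex.exp_eq_one_iff]
  constructor
  · rintro ⟨n, hn⟩
    have h : ((-(2 * r) : ℝ) : ℂ) = 2 * n := mul_left_cancel₀ hπI (hn.trans (by ring))
    exact ⟨-n, by push_cast; linarith [show -(2 * r) = 2 * (n : ℝ) by exact_mod_cast h]⟩
  · rintro ⟨n, rfl⟩
    exact ⟨-n, by push_cast; ring⟩

lemma ePi_neg_two_mul_intCast (n : ℤ) : ePi (-(2 * (n : ℝ))) = 1 :=
  (ePi_neg_two_mul_eq_one_iff _).2 ⟨n, rfl⟩

lemma summable_mul_ePi {ι : Type*} {d : ι → ℂ} (hd : Summable fun k => ‖d k‖) (f : ι → ℝ) :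
    Summable fun k => d k * ePi (f k) :=
  Summable.of_norm (by simpa only [norm_mul, norm_ePi, mul_one] using hd)

lemma zc_add (a b : Z2) : zc (a + b) = zc a + zc b := by
  funext i; simp [zc]

lemma zc_injective : Function.Injective zc := fun _ _ h =>
  funext fun i => Int.cast_injective (α := ℝ) (congrFun h i)

lemma zc_dotProduct (a b : Z2) : zc a ⬝ᵥ zc b = ((a ⬝ᵥ b : ℤ) : ℝ) := by
  simp [zc, dotProduct]

lemma zc_mulVec (M : Matrix (Fin 2) (Fin 2) ℤ) (q : Z2) : zc (M *ᵥ q) = Mr M *ᵥ zc q :=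
  funext fun i => RingHom.map_mulVec (Int.castRingHom ℝ) M q i

lemma Mr_transpose (M : Matrix (Fin 2) (Fin 2) ℤ) : Mr Mᵀ = (Mr M)ᵀ :=
  transpose_map.symm

lemma isUnit_det_Mr {M : Matrix (Fin 2) (Fin 2) ℤ} (hM : M.det ≠ 0) : IsUnit (Mr M).det := by
  have h : (Mr M).det = M.det := (RingHom.map_det (Int.castRingHom ℝ) M).symm
  exact isUnit_iff_ne_zero.2 (by rw [h]; exact_mod_cast hM)

lemma zc_transpose_mulVec_dotProduct (M : Matrix (Fin 2) (Fin 2) ℤ) (hM : M.det ≠ 0)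
    (k : Z2) (x : V2) : zc (Mᵀ *ᵥ k) ⬝ᵥ (Mr M)⁻¹ *ᵥ x = zc k ⬝ᵥ x := by
  rw [zc_mulVec, Mr_transpose, mulVec_transpose, dotProduct_mulVec, vecMul_vecMul,
    mul_nonsing_inv _ (isUnit_det_Mr hM), vecMul_one]

lemma transpose_mulVec_injective {M : Matrix (Fin 2) (Fin 2) ℤ} (hM : M.det ≠ 0) :
    Function.Injective (Mᵀ *ᵥ ·) := by
  intro a b h
  have hMt : Function.Injective (Mr Mᵀ *ᵥ ·) := mulVec_injective_iff_isUnit.2 <| by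
    rw [isUnit_iff_isUnit_det, Mr_transpose, det_transpose]; exact isUnit_det_Mr hM
  exact zc_injective (hMt (by simpa only [zc_mulVec] using congrArg zc h))

/-- Translation by an `x₀` with `ψ x₀ ≠ 1` permutes the transversal modulo `φ K`, so the sum is
fixed by multiplication by `ψ x₀`. -/
theorem AddChar.sum_transversal_eq_zero {G K R ι : Type*} [AddCommGroup G] [AddCommGroup K]
    [CommRing R] [IsDomain R] [Fintype ι] (φ : K →+ G) (γ : ι → G)
    (hγ : ∀ g, ∃! p : ι × K, g = γ p.1 + φ p.2) (ψ : AddChar G R)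
    (hψφ : ∀ k, ψ (φ k) = 1) (hψ : ψ ≠ 1) : ∑ i, ψ (γ i) = 0 := by
  obtain ⟨x₀, hx₀⟩ := AddChar.ne_one_iff.1 hψ
  choose p hp using fun i => (hγ (γ i + x₀)).exists
  have hσ_inj : Function.Injective fun i => (p i).1 := by
    intro i i' h
    have hi : γ i = γ i' + φ ((p i).2 - (p i').2) := by
      have h₁ := hp i
      rw [show (p i).1 = (p i').1 from h] at h₁
      rw [map_sub, eq_sub_of_add_eq' h₁.symm, eq_sub_of_add_eq' (hp i').symm]
      abel
    exact congrArg Prod.fst ((hγ (γ i)).unique (y₁ := (i, 0)) (y₂ := (i', _)) (by simp) hi)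
  let e : ι ≃ ι := Equiv.ofBijective _ (Finite.injective_iff_bijective.1 hσ_inj)
  have hshift : (∑ i, ψ (γ i)) * ψ x₀ = ∑ i, ψ (γ i) := calc
    (∑ i, ψ (γ i)) * ψ x₀ = ∑ i, ψ (γ (e i)) := by
      rw [Finset.sum_mul]
      refine Finset.sum_congr rfl fun i _ => ?_
      rw [← AddChar.map_add_eq_mul, hp, AddChar.map_add_eq_mul, hψφ, mul_one]; rfl
    _ = ∑ i, ψ (γ i) := e.sum_comp (ψ ∘ γ)
  exact (mul_eq_zero.1 (by rw [mul_sub, hshift, mul_one, sub_self] :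
    (∑ i, ψ (γ i)) * (ψ x₀ - 1) = 0)).resolve_right (sub_ne_zero.2 hx₀)

def dilationChar (M : Matrix (Fin 2) (Fin 2) ℤ) (n : Z2) : AddChar Z2 ℂ where
  toFun x := ePi (-(2 * (zc n ⬝ᵥ (Mr M)⁻¹ *ᵥ zc x)))
  map_zero_eq_one' := by simp [zc, ePi]
  map_add_eq_mul' x y := by rw [← ePi_add, zc_add, mulVec_add, dotProduct_add]; ring_nf

lemma dilationChar_apply (M : Matrix (Fin 2) (Fin 2) ℤ) (n x : Z2) :
    dilationChar M n x = ePi (-(2 * (zc n ⬝ᵥ (Mr M)⁻¹ *ᵥ zc x))) := rfl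

lemma dilationChar_mulVec {M : Matrix (Fin 2) (Fin 2) ℤ} (hM : M.det ≠ 0) (n q : Z2) :
    dilationChar M n (M *ᵥ q) = 1 := by
  rw [dilationChar_apply, zc_mulVec, mulVec_mulVec, nonsing_inv_mul _ (isUnit_det_Mr hM),
    one_mulVec, zc_dotProduct, ePi_neg_two_mul_intCast]

lemma dilationChar_eq_one_iff {M : Matrix (Fin 2) (Fin 2) ℤ} (hM : M.det ≠ 0) (n : Z2) :
    dilationChar M n = 1 ↔ n ∈ Set.range (Mᵀ *ᵥ ·) := by
  constructor
  · intro hψ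
    have hint : ∀ i, ∃ z : ℤ, (zc n ᵥ* (Mr M)⁻¹) i = z := fun i => by
      have h := DFunLike.congr_fun hψ (Pi.single i 1)
      have hzc : zc (Pi.single i 1) = Pi.single i 1 := by
        funext j; by_cases hj : j = i <;> simp [zc, hj]
      rwa [dilationChar_apply, AddChar.one_apply, hzc, dotProduct_mulVec, dotProduct_single,
        mul_one, ePi_neg_two_mul_eq_one_iff] at h
    choose k hk using hint
    refine ⟨k, zc_injective ?_⟩
    rw [zc_mulVec, Mr_transpose, mulVec_transpose, show zc k = zc n ᵥ* (Mr M)⁻¹ from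
      (funext hk).symm, vecMul_vecMul, nonsing_inv_mul _ (isUnit_det_Mr hM), vecMul_one]
  · rintro ⟨k, rfl⟩
    ext x
    rw [dilationChar_apply, AddChar.one_apply, zc_transpose_mulVec_dotProduct M hM,
      zc_dotProduct, ePi_neg_two_mul_intCast]

lemma sum_dilationChar_transversal {M : Matrix (Fin 2) (Fin 2) ℤ} (hM : M.det ≠ 0)
    {ι : Type*} [Fintype ι] (γ : ι → Z2) (hγ : ∀ n : Z2, ∃! p : ι × Z2, n = γ p.1 + M *ᵥ p.2)
    (n : Z2) :
    ∑ j, dilationChar M n (γ j) =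
      (Set.range (Mᵀ *ᵥ ·)).indicator (fun _ => (Fintype.card ι : ℂ)) n := by
  by_cases hn : n ∈ Set.range (Mᵀ *ᵥ ·)
  · rw [Set.indicator_of_mem hn, (dilationChar_eq_one_iff hM n).2 hn]
    simp
  · rw [Set.indicator_of_notMem hn]
    exact AddChar.sum_transversal_eq_zero M.mulVecLin.toAddMonoidHom γ hγ _
      (dilationChar_mulVec hM n) (mt (dilationChar_eq_one_iff hM n).1 hn)

theorem sum_DTFT_transversal {M : Matrix (Fin 2) (Fin 2) ℤ} (hM : M.det ≠ 0)
    {ι : Type*} [Fintype ι] (γ : ι → Z2) (hγ : ∀ n : Z2, ∃! p : ι × Z2, n = γ p.1 + M *ᵥ p.2)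
    {d : Z2 → ℂ} (hd : Summable fun k => ‖d k‖) (ξ : V2) :
    ∑ j, DTFT d ((Mr M)⁻¹ *ᵥ (ξ + zc (γ j))) =
      Fintype.card ι * DTFT (fun k => d (Mᵀ *ᵥ k)) ξ := by
  set e : Z2 → ℂ := fun n => d n * ePi (-(2 * (zc n ⬝ᵥ (Mr M)⁻¹ *ᵥ ξ)))
  have hsplit : ∀ j n, d n * ePi (-(2 * (zc n ⬝ᵥ (Mr M)⁻¹ *ᵥ (ξ + zc (γ j))))) =
      e n * dilationChar M n (γ j) := fun j n => by
    rw [dilationChar_apply, mulVec_add, dotProduct_add, mul_add, neg_add, ePi_add, mul_assoc]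
  calc ∑ j, DTFT d ((Mr M)⁻¹ *ᵥ (ξ + zc (γ j)))
      = ∑' n, ∑ j, e n * dilationChar M n (γ j) := by
        simp only [DTFT, ← hsplit]
        exact (Summable.tsum_finsetSum fun j _ => summable_mul_ePi hd _).symm
    _ = ∑' n, (Set.range (Mᵀ *ᵥ ·)).indicator (fun n => e n * Fintype.card ι) n := by
        simp only [← Finset.mul_sum, sum_dilationChar_transversal hM γ hγ,
          Set.indicator_mul_right]
    _ = ∑' k, e (Mᵀ *ᵥ k) * Fintype.card ι := by
        rw [← tsum_subtype]
        exact tsum_range (fun n => e n * Fintype.card ι) (transpose_mulVec_injective hM)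
    _ = Fintype.card ι * DTFT (fun k => d (Mᵀ *ᵥ k)) ξ := by
        rw [tsum_mul_right, mul_comm]
        simp only [e, DTFT, zc_transpose_mulVec_dotProduct M hM]

lemma chirp_mul_DLCT {A B D : M2} (hB : B.det ≠ 0) (c : Z2 → ℂ) (v : V2) :
    ePi (-(B *ᵥ v ⬝ᵥ D *ᵥ v)) * DLCT A B D c (B *ᵥ v) =
      (sdet B)⁻¹ * DTFT (fun n => c n * lam A B (zc n)) v := by
  have hBB : B⁻¹ * B = 1 := nonsing_inv_mul _ (isUnit_iff_ne_zero.2 hB)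
  have hexp : ∀ n, Q (B⁻¹ * A) (zc n) (zc n) - 2 * Q B⁻¹ (zc n) (B *ᵥ v) +
      Q (D * B⁻¹) (B *ᵥ v) (B *ᵥ v) =
      Q (B⁻¹ * A) (zc n) (zc n) + -(2 * (zc n ⬝ᵥ v)) + (B *ᵥ v ⬝ᵥ D *ᵥ v) := fun n => by
    simp only [Q, mulVec_mulVec, mul_assoc, hBB, mul_one, one_mulVec]; ring
  rw [DLCT, DTFT, mul_left_comm, ← tsum_mul_left]
  congr 1
  refine tsum_congr fun n => ?_
  rw [hexp, ePi_add, ePi_add, lam]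
  have hcancel : ePi (-(B *ᵥ v ⬝ᵥ D *ᵥ v)) * ePi (B *ᵥ v ⬝ᵥ D *ᵥ v) = 1 := by
    rw [← ePi_add, neg_add_cancel]; simp [ePi]
  linear_combination (c n * ePi (Q (B⁻¹ * A) (zc n) (zc n)) * ePi (-(2 * (zc n ⬝ᵥ v)))) * hcancel

theorem poisson_dlct_general (A B D : M2) (hB : B.det ≠ 0)
    (M : Matrix (Fin 2) (Fin 2) ℤ) (hM : M.det ≠ 0)
    (m : ℕ)
    (γ : Fin m → Z2)
    (hγ : ∀ n : Z2, ∃! p : Fin m × Z2, n = γ p.1 + M.mulVec p.2)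
    (c : Z2 → ℂ) (hc : Summable fun k => ‖c k‖) :
    ∀ ξ : V2,
      (m : ℂ) / sdet B *
          DTFT (fun k => c (Mᵀ.mulVec k) * lam A B (zc (Mᵀ.mulVec k))) ξ =
        ∑ k : Fin m,
          ePi (-(((B * (Mr M)⁻¹).mulVec (ξ + zc (γ k))) ⬝ᵥ
                 ((D * (Mr M)⁻¹).mulVec (ξ + zc (γ k))))) *
            DLCT A B D c ((B * (Mr M)⁻¹).mulVec (ξ + zc (γ k))) := by
  intro ξ
  have hchirped : Summable fun n => ‖c n * lam A B (zc n)‖ := by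
    simpa only [norm_mul, lam, norm_ePi, mul_one] using hc
  calc (m : ℂ) / sdet B * DTFT (fun k => c (Mᵀ *ᵥ k) * lam A B (zc (Mᵀ *ᵥ k))) ξ
      = (sdet B)⁻¹ * ∑ k : Fin m,
          DTFT (fun n => c n * lam A B (zc n)) ((Mr M)⁻¹ *ᵥ (ξ + zc (γ k))) := by
        rw [sum_DTFT_transversal hM γ hγ hchirped, Fintype.card_fin, div_eq_inv_mul, mul_assoc]
    _ = _ := by
        simp only [Finset.mul_sum, ← mulVec_mulVec, chirp_mul_DLCT hB]

/-- Poisson-type summation formula in the 2D-DT-NS-LCT domain. -/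
theorem poisson_dlct (A B C D : M2) (hSymp : Symp A B C D) (hB : B.det ≠ 0)
    (M : Matrix (Fin 2) (Fin 2) ℤ) (hM : M.det ≠ 0)
    (m : ℕ) (hm : m = M.det.natAbs)
    (γ : Fin m → Z2) (hγ0 : ∀ h : 0 < m, γ ⟨0, h⟩ = 0)
    (hγ : ∀ n : Z2, ∃! p : Fin m × Z2, n = γ p.1 + M.mulVec p.2)
    (c : Z2 → ℂ) (hc : Summable fun k => ‖c k‖) :
    ∀ ξ : V2,
      (m : ℂ) / sdet B *
          DTFT (fun k => c (Mᵀ.mulVec k) * lam A B (zc (Mᵀ.mulVec k))) ξ =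
        ∑ k : Fin m,
          ePi (-(((B * (Mr M)⁻¹).mulVec (ξ + zc (γ k))) ⬝ᵥ
                 ((D * (Mr M)⁻¹).mulVec (ξ + zc (γ k))))) *
            DLCT A B D c ((B * (Mr M)⁻¹).mulVec (ξ + zc (γ k))) :=
  poisson_dlct_general A B D hB M hM m γ hγ c hc
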